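/- Let G be a 3-connected graph, A a set of independent edges with G − A having two components G₁ and G₂ each of which is 2-connected, and each edge of A joining G₁ to G₂. Then G contains a subgraph of type X whose three connectors all belong to A. -/

import Mathlib

open SimpleGraph

universe u v

/-- A circuit of `G` is the edge set of a cycle of `G`. -/
def IsCircuit {V : Type u} (G : SimpleGraph V) (C : Set (Sym2 V)) : Prop :=
  ∃ (x : V) (w : G.Walk x x), w.IsCycle ∧ C = {e | e ∈ w.edges}

/-- The set of vertices covered by a set of edges. -/
def circVerts {V : Type u} (C : Set (Sym2 V)) : Set V :=
  {x | ∃ e ∈ C, x ∈ e}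

/-- A set of edges is independent if its edges are pairwise nonadjacent. -/
def IndepEdges {V : Type u} (A : Set (Sym2 V)) : Prop :=
  ∀ e₁ ∈ A, ∀ e₂ ∈ A, e₁ ≠ e₂ → ∀ x : V, x ∈ e₁ → x ∉ e₂

/-- 2-connected: connected, at least 3 vertices, and deleting any one vertex
leaves the graph connected. -/
def TwoConnected {V : Type u} (G : SimpleGraph V) : Prop :=
  G.Connected ∧ (3 : Cardinal) ≤ Cardinal.mk V ∧
    ∀ x : V, (G.induce {x}ᶜ).Connected

/-- 3-connected: at least 4 vertices and deleting any two vertices leaves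
the graph connected. -/
def ThreeConnected {V : Type u} (G : SimpleGraph V) : Prop :=
  (4 : Cardinal) ≤ Cardinal.mk V ∧
    ∀ x y : V, (G.induce ({x, y} : Set V)ᶜ).Connected

/-- k-connected: more than k vertices and deleting any set of fewer than k
vertices leaves the graph connected. -/
def KConnected {V : Type u} (k : ℕ) (G : SimpleGraph V) : Prop :=
  (k : Cardinal) < Cardinal.mk V ∧
    ∀ s : Set V, s.Finite → Nat.card s < k → (G.induce sᶜ).Connected

/-- The image of a set of edges of `G` under an edge map `f`. -/
def mapEdges {V : Type u} {V' : Type v} (G : SimpleGraph V) (G' : SimpleGraph V')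
    (f : G.edgeSet → G'.edgeSet) (C : Set (Sym2 V)) : Set (Sym2 V') :=
  {e' | ∃ e : G.edgeSet, (e : Sym2 V) ∈ C ∧ (f e : Sym2 V') = e'}

/-- The preimage of a set of edges of `G'` under an edge map `f`. -/
def preimEdges {V : Type u} {V' : Type v} (G : SimpleGraph V) (G' : SimpleGraph V')
    (f : G.edgeSet → G'.edgeSet) (S : Set (Sym2 V')) : Set (Sym2 V) :=
  {e | ∃ he : e ∈ G.edgeSet, (f ⟨e, he⟩ : Sym2 V') ∈ S}

/-- A circuit injection from `G` onto `G'`: an injective, surjective map on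
edges carrying every circuit of `G` to a circuit of `G'`, where `G'` has no
isolated vertices. -/
def IsCircuitInjection {V : Type u} {V' : Type v} (G : SimpleGraph V) (G' : SimpleGraph V')
    (f : G.edgeSet → G'.edgeSet) : Prop :=
  Function.Injective f ∧ Function.Surjective f ∧
    (∀ C : Set (Sym2 V), IsCircuit G C → IsCircuit G' (mapEdges G G' f C)) ∧
    ∀ x : V', ∃ y : V', G'.Adj x y

/-- `G` contains a subgraph of type X with connectors `e₁`, `e₂`, `e₃`:
two vertex-disjoint circuits `CA`, `CB`, edges `e₁ = (a₁,b₁)`, `e₂ = (a₂,b₂)`,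
and a path from `a₃` to `b₃` internally disjoint from both circuits, with
`a₁,a₂,a₃` distinct on `CA` and `b₁,b₂,b₃` distinct on `CB`, and `e₃` an edge
of the path. -/
def IsTypeXWith {V : Type u} (G : SimpleGraph V) (e₁ e₂ e₃ : Sym2 V) : Prop :=
  ∃ (a₁ a₂ a₃ b₁ b₂ b₃ : V) (CA CB : Set (Sym2 V)) (P : G.Walk a₃ b₃),
    IsCircuit G CA ∧ IsCircuit G CB ∧
    Disjoint (circVerts CA) (circVerts CB) ∧
    a₁ ∈ circVerts CA ∧ a₂ ∈ circVerts CA ∧ a₃ ∈ circVerts CA ∧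
    b₁ ∈ circVerts CB ∧ b₂ ∈ circVerts CB ∧ b₃ ∈ circVerts CB ∧
    a₁ ≠ a₂ ∧ a₁ ≠ a₃ ∧ a₂ ≠ a₃ ∧ b₁ ≠ b₂ ∧ b₁ ≠ b₃ ∧ b₂ ≠ b₃ ∧
    G.Adj a₁ b₁ ∧ G.Adj a₂ b₂ ∧ e₁ = s(a₁, b₁) ∧ e₂ = s(a₂, b₂) ∧
    P.IsPath ∧
    (∀ x ∈ P.support, x ≠ a₃ → x ≠ b₃ → x ∉ circVerts CA ∪ circVerts CB) ∧
    e₃ ∈ P.edges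

/-- `G` is (all of) a graph of type X with connectors `e₁`, `e₂`, `e₃`. -/
def IsTypeXGraph {V : Type u} (G : SimpleGraph V) (e₁ e₂ e₃ : Sym2 V) : Prop :=
  ∃ (a₁ a₂ a₃ b₁ b₂ b₃ : V) (CA CB : Set (Sym2 V)) (P : G.Walk a₃ b₃),
    IsCircuit G CA ∧ IsCircuit G CB ∧
    Disjoint (circVerts CA) (circVerts CB) ∧
    a₁ ∈ circVerts CA ∧ a₂ ∈ circVerts CA ∧ a₃ ∈ circVerts CA ∧
    b₁ ∈ circVerts CB ∧ b₂ ∈ circVerts CB ∧ b₃ ∈ circVerts CB ∧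
    a₁ ≠ a₂ ∧ a₁ ≠ a₃ ∧ a₂ ≠ a₃ ∧ b₁ ≠ b₂ ∧ b₁ ≠ b₃ ∧ b₂ ≠ b₃ ∧
    G.Adj a₁ b₁ ∧ G.Adj a₂ b₂ ∧ e₁ = s(a₁, b₁) ∧ e₂ = s(a₂, b₂) ∧
    P.IsPath ∧
    (∀ x ∈ P.support, x ≠ a₃ → x ≠ b₃ → x ∉ circVerts CA ∪ circVerts CB) ∧
    e₃ ∈ P.edges ∧
    G.edgeSet = CA ∪ CB ∪ {e₁, e₂} ∪ {e | e ∈ P.edges}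

/-!
Three-connectivity yields three distinct vertices `a₁, a₂, a₃` of `G₁` with neighbours
`b₁, b₂, b₃` outside `G₁`; the edges `aᵢbᵢ` lie in `A`, so the `bᵢ` are distinct by independence.
On each side, 2-connectivity gives a cycle through the first two ends (grown along a walk, rerouting
the cycle through each new vertex) and a path from the third end to a further vertex of that cycle:
a second path branching off a first one either reaches the cycle at a new vertex or lets the cycle
be rerouted through the branch point. The two halves and the edge `a₃b₃` form the type-X subgraph.
-/

namespace SimpleGraph.Walk

variable {V : Type*} {G : SimpleGraph V} {u v w : V}

lemma IsPath.append {p : G.Walk u v} {q : G.Walk v w} (hp : p.IsPath) (hq : q.IsPath)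
    (hpq : ∀ t ∈ p.support, t ∈ q.support → t = v) : (p.append q).IsPath := by
  rw [isPath_def, support_append, List.nodup_append]
  refine ⟨hp.support_nodup, hq.support_nodup.tail, fun t htp t' htq htt' => ?_⟩
  subst htt'
  have hq' := hq.support_nodup
  rw [← cons_tail_support, List.nodup_cons] at hq'
  exact hq'.1 (hpq t htp (List.mem_of_mem_tail htq) ▸ htq)

lemma IsPath.isCycle_append_reverse {p q : G.Walk u v} (hp : p.IsPath) (hq : q.IsPath)
    (hpq : ∀ t ∈ p.support, t ∈ q.support → t = u ∨ t = v) (hlen : 1 < p.length) :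
    (p.append q.reverse).IsCycle := by
  refine hp.isCycle_append hq.reverse (fun t htp htq => ?_) (.inl hlen)
  have hp' := hp.support_nodup
  have hq' := hq.reverse.support_nodup
  rw [← cons_tail_support, List.nodup_cons] at hp' hq'
  rcases hpq t (List.mem_of_mem_tail htp)
      (by simpa using List.mem_of_mem_tail htq) with rfl | rfl
  · exact hp'.1 htp
  · exact hq'.1 htq

lemma IsPath.exists_first_mem {p : G.Walk u v} (hp : p.IsPath) {S : Set V} (hv : v ∈ S) :
    ∃ w ∈ S, ∃ q : G.Walk u w, q.IsPath ∧ q.support ⊆ p.support ∧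
      ∀ t ∈ q.support, t ∈ S → t = w := by
  induction p with
  | nil => exact ⟨_, hv, Walk.nil, .nil, List.Subset.refl _, by simp⟩
  | @cons a b c h p ih =>
    by_cases ha : a ∈ S
    · exact ⟨a, ha, Walk.nil, .nil, by simp, by simp⟩
    obtain ⟨w, hw, q, hq, hqp, hqS⟩ := ih hp.of_cons hv
    refine ⟨w, hw, cons h q, hq.cons fun haq => ?_, ?_, ?_⟩
    · exact ((cons_isPath_iff h p).mp hp).2 (hqp haq)
    · simpa using List.subset_cons_of_subset a hqp
    · simp only [support_cons, List.mem_cons, forall_eq_or_imp]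
      exact ⟨fun h => absurd h ha, hqS⟩

lemma IsPath.eq_of_mem_support_takeUntil_of_mem_support_dropUntil [DecidableEq V]
    {p : G.Walk u v} (hp : p.IsPath) (hw : w ∈ p.support) {t : V}
    (ht : t ∈ (p.takeUntil w hw).support) (ht' : t ∈ (p.dropUntil w hw).support) : t = w := by
  have hnd := hp.support_nodup
  rw [← p.take_spec hw, support_append, List.nodup_append] at hnd
  rw [← cons_tail_support, List.mem_cons] at ht'
  exact ht'.resolve_right fun ht' => hnd.2.2 t ht t ht' rfl

lemma IsCycle.exists_isPath_mem_support {c : G.Walk v v} (hc : c.IsCycle) {a b t : V}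
    (ha : a ∈ c.support) (hb : b ∈ c.support) (hab : a ≠ b) (ht : t ∈ c.support) :
    ∃ A : G.Walk a b, A.IsPath ∧ t ∈ A.support ∧ A.support ⊆ c.support := by
  classical
  set c' := c.rotate a ha
  have hc' : c'.IsCycle := hc.rotate ha
  have hsub : c'.support ⊆ c.support := fun s hs => (mem_support_rotate_iff c a ha).mp hs
  have hb' : b ∈ c'.support := (mem_support_rotate_iff c a ha).mpr hb
  have hsplit := c'.take_spec hb'
  have ht' : t ∈ (c'.takeUntil b hb').support ∨ t ∈ (c'.dropUntil b hb').support := by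
    rw [← mem_support_append_iff, hsplit]
    exact (mem_support_rotate_iff c a ha).mpr ht
  rcases ht' with ht' | ht'
  · exact ⟨_, hc'.isPath_takeUntil hb', ht',
      List.Subset.trans (c'.support_takeUntil_subset_support hb') hsub⟩
  · refine ⟨(c'.dropUntil b hb').reverse, ?_, by simpa using ht', ?_⟩
    · refine (IsCycle.isPath_of_append_right ?_ (hsplit ▸ hc')).reverse
      exact not_nil_of_ne hab
    · simpa using List.Subset.trans (c'.support_dropUntil_subset_support hb') hsub

lemma IsCycle.exists_isCycle_of_isPath {c : G.Walk v v} (hc : c.IsCycle) {a b t : V}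
    (ha : a ∈ c.support) (hb : b ∈ c.support) (hab : a ≠ b) (ht : t ∈ c.support)
    {P : G.Walk a b} (hP : P.IsPath) (hPc : ∀ s ∈ P.support, s ∈ c.support → s = a ∨ s = b)
    (hlen : 1 < P.length) :
    ∃ c' : G.Walk a a, c'.IsCycle ∧ t ∈ c'.support ∧ P.support ⊆ c'.support ∧
      c'.support ⊆ P.support ++ c.support := by
  classical
  obtain ⟨A, hA, htA, hAc⟩ := hc.exists_isPath_mem_support ha hb hab ht
  refine ⟨P.append A.reverse, hP.isCycle_append_reverse hA (fun s hs hsA => hPc s hs (hAc hsA))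
    hlen, by simp [htA], fun s hs => by simp [hs], fun s hs => ?_⟩
  rw [mem_support_append_iff, support_reverse, List.mem_reverse] at hs
  exact List.mem_append.mpr (hs.imp_right fun h => hAc h)

lemma IsCycle.exists_isCycle_of_adj {c : G.Walk v v} (hc : c.IsCycle) {x w y : V}
    (hx : x ∈ c.support) (hw : w ∈ c.support) (hwy : G.Adj w y) (hy : y ∉ c.support)
    {R : G.Walk y x} (hR : R.IsPath) (hwR : w ∉ R.support) :
    ∃ (v' : V) (c' : G.Walk v' v'), c'.IsCycle ∧ x ∈ c'.support ∧ y ∈ c'.support := by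
  obtain ⟨z, hz, Q, hQ, hQR, hQc⟩ := hR.exists_first_mem (S := {t | t ∈ c.support}) hx
  have hwz : w ≠ z := fun h => hwR (hQR (h ▸ Q.end_mem_support))
  have hQlen : Q.length ≠ 0 := fun h => hy (eq_of_length_eq_zero h ▸ hz)
  obtain ⟨c', hc', hxc', hPc', -⟩ := hc.exists_isCycle_of_isPath hw hz hwz hx (P := cons hwy Q)
    (hQ.cons fun h => hwR (hQR h)) (by simpa using fun t ht htc => .inr (hQc t ht htc))
    (by simp only [length_cons]; omega)
  exact ⟨w, c', hc', hxc', hPc' (by simp)⟩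

/-- The new cycle runs from `w₀` back along `Q` to `r`, along `L` to `w₁`, and returns to `w₀`
along an arc of `c`. -/
lemma IsCycle.exists_isCycle_of_branch [DecidableEq V] {c : G.Walk v v} (hc : c.IsCycle)
    {z w₀ w₁ r : V} (hw₀ : w₀ ∈ c.support) (hw₁ : w₁ ∈ c.support) (hw₀₁ : w₀ ≠ w₁)
    {Q : G.Walk z w₀} (hQ : Q.IsPath) (hrQ : r ∈ Q.support) {L : G.Walk r w₁} (hL : L.IsPath)
    (hQc : ∀ t ∈ Q.support, t ∈ c.support → t = w₀)
    (hLc : ∀ t ∈ L.support, t ∈ c.support → t = w₁)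
    (hLQ : ∀ t ∈ L.support, t ∈ Q.support → t = r)
    (hZc : ∀ t ∈ (Q.takeUntil r hrQ).support, t ∉ c.support) :
    ∃ c' : G.Walk w₀ w₀, c'.IsCycle ∧ w₁ ∈ c'.support ∧ r ∈ c'.support ∧
      ∀ t ∈ (Q.takeUntil r hrQ).support, t ∈ c'.support → t = r := by
  set D := Q.dropUntil r hrQ
  have hrc : r ∉ c.support := hZc r (Q.takeUntil r hrQ).end_mem_support
  have hDQ : ∀ t ∈ D.reverse.support, t ∈ Q.support := fun t ht =>
    Q.support_dropUntil_subset_support hrQ (by simpa using ht)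
  have hP : (D.reverse.append L).IsPath :=
    (hQ.dropUntil hrQ).reverse.append hL fun t ht htL => hLQ t htL (hDQ t ht)
  have hPc : ∀ t ∈ (D.reverse.append L).support, t ∈ c.support → t = w₀ ∨ t = w₁ := by
    intro t ht htc
    rw [mem_support_append_iff] at ht
    exact ht.imp (fun ht => hQc t (hDQ t ht) htc) (fun ht => hLc t ht htc)
  have hlen : 1 < (D.reverse.append L).length := by
    have hD : D.length ≠ 0 := fun h => hrc (eq_of_length_eq_zero h ▸ hw₀)
    have hL : L.length ≠ 0 := fun h => hrc (eq_of_length_eq_zero h ▸ hw₁)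
    simp only [length_append, length_reverse]
    omega
  obtain ⟨c', hc', hw₁c', hPc', hc'P⟩ := hc.exists_isCycle_of_isPath hw₀ hw₁ hw₀₁ hw₁ hP hPc hlen
  refine ⟨c', hc', hw₁c', hPc' (by simp), fun t ht htc' => ?_⟩
  rcases List.mem_append.mp (hc'P htc') with htP | htc
  · rw [mem_support_append_iff, support_reverse, List.mem_reverse] at htP
    exact htP.elim (hQ.eq_of_mem_support_takeUntil_of_mem_support_dropUntil hrQ ht)
      (hLQ t · (Q.support_takeUntil_subset_support hrQ ht))
  · exact absurd htc (hZc t ht)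

end SimpleGraph.Walk

open Walk

lemma circVerts_setOf_mem_edges {V : Type*} {G : SimpleGraph V} {u v : V} {p : G.Walk u v}
    (hp : ¬p.Nil) : circVerts {e | e ∈ p.edges} = {x | x ∈ p.support} := by
  ext x
  simp [circVerts, mem_support_iff_exists_mem_edges_of_not_nil hp]

/-- One side of a type-X graph, inside `S`: `x`, `y`, `z` are the ends there of the connectors
`e₁`, `e₂`, `e₃`, and `q` is the part of the path `P` on this side. -/
def IsTypeXHalf {V : Type*} (G : SimpleGraph V) (S : Set V) (x y z : V) : Prop :=
  ∃ (v w : V) (c : G.Walk v v) (q : G.Walk z w), c.IsCycle ∧ x ∈ c.support ∧ y ∈ c.support ∧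
    w ∈ c.support ∧ w ≠ x ∧ w ≠ y ∧ q.IsPath ∧ (∀ t ∈ q.support, t ∈ c.support → t = w) ∧
    (∀ t ∈ c.support, t ∈ S) ∧ ∀ t ∈ q.support, t ∈ S

namespace TwoConnected

variable {V : Type*} {G : SimpleGraph V}

lemma exists_isPath_notMem (hG : TwoConnected G) {u v t : V} (hu : u ≠ t) (hv : v ≠ t) :
    ∃ p : G.Walk u v, p.IsPath ∧ t ∉ p.support := by
  obtain ⟨p, hp⟩ := (hG.2.2 t).exists_isPath ⟨u, Set.mem_compl_singleton_iff.mpr hu⟩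
    ⟨v, Set.mem_compl_singleton_iff.mpr hv⟩
  have ht : t ∉ (p.map (Embedding.induce _).toHom).support := by
    rw [Walk.support_map, List.mem_map]
    exact fun ⟨s, _, hs⟩ => s.2 (Set.mem_singleton_iff.mpr hs)
  exact ⟨_, hp.map Subtype.val_injective, ht⟩

lemma exists_isCycle_of_adj (hG : TwoConnected G) {x y : V} (hxy : G.Adj x y) :
    ∃ (v : V) (c : G.Walk v v), c.IsCycle ∧ x ∈ c.support ∧ y ∈ c.support := by
  obtain ⟨u, hux, huy⟩ := Cardinal.exists_ne_ne_of_three_le hG.2.1 x y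
  obtain ⟨p, -, hyp⟩ := hG.exists_isPath_notMem hxy.ne huy
  cases p with
  | nil => exact absurd rfl hux
  | @cons _ z _ hxz q =>
    have hzy : z ≠ y := fun h => hyp (by simp [← h])
    obtain ⟨R, hR, hxR⟩ := hG.exists_isPath_notMem hxz.ne.symm hxy.ne.symm
    refine ⟨x, (cons hxz R).append hxy.toWalk.reverse, ?_, by simp, by simp⟩
    refine (hR.cons hxR).isCycle_append_reverse hxy.isPath_toWalk (by simp) ?_
    have : R.length ≠ 0 := fun h => hzy (eq_of_length_eq_zero h)
    simp only [length_cons]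
    omega

lemma exists_isCycle_mem_mem (hG : TwoConnected G) {x y : V} (hxy : x ≠ y) :
    ∃ (v : V) (c : G.Walk v v), c.IsCycle ∧ x ∈ c.support ∧ y ∈ c.support := by
  classical
  obtain ⟨p⟩ := hG.1.preconnected y x
  induction p with
  | nil => exact absurd rfl hxy
  | @cons y w x hyw q ih =>
    by_cases hwx : w = x
    · subst hwx
      obtain ⟨v, c, hc, hyc, hwc⟩ := hG.exists_isCycle_of_adj hyw
      exact ⟨v, c, hc, hwc, hyc⟩
    obtain ⟨v, c, hc, hxc, hwc⟩ := ih (Ne.symm hwx)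
    by_cases hyc : y ∈ c.support
    · exact ⟨v, c, hc, hxc, hyc⟩
    obtain ⟨R, hR, hwR⟩ := hG.exists_isPath_notMem hyw.ne (Ne.symm hwx)
    exact hc.exists_isCycle_of_adj hxc hwc hyw.symm hyc hR hwR

/-- Two paths to `S` from outside, the second branching off the first, ending at distinct
vertices of `S`. -/
lemma exists_isPath_branch (hG : TwoConnected G) {S : Set V} {x y z : V} (hx : x ∈ S)
    (hy : y ∈ S) (hxy : x ≠ y) (hz : z ∉ S) :
    ∃ w₀ ∈ S, ∃ w₁ ∈ S, w₀ ≠ w₁ ∧ ∃ (Q : G.Walk z w₀) (r : V) (_ : r ∈ Q.support)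
      (L : G.Walk r w₁), Q.IsPath ∧ L.IsPath ∧ (∀ t ∈ Q.support, t ∈ S → t = w₀) ∧
      (∀ t ∈ L.support, t ∈ S → t = w₁) ∧ ∀ t ∈ L.support, t ∈ Q.support → t = r := by
  obtain ⟨p, hp⟩ := hG.1.exists_isPath z x
  obtain ⟨w₀, hw₀, Q, hQ, -, hQS⟩ := hp.exists_first_mem hx
  obtain ⟨s, hs, hsw₀⟩ : ∃ s ∈ S, s ≠ w₀ := by
    by_cases h : x = w₀
    exacts [⟨y, hy, h ▸ hxy.symm⟩, ⟨x, hx, h⟩]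
  obtain ⟨R, hR, hw₀R⟩ := hG.exists_isPath_notMem (ne_of_mem_of_not_mem hw₀ hz).symm hsw₀
  -- `r` is the last vertex of `R` on `Q`, and `L` follows `R` from there until it reaches `S`
  obtain ⟨r, hrQ, q, hq, hqR, hqQ⟩ :=
    hR.reverse.exists_first_mem (S := {t | t ∈ Q.support}) Q.start_mem_support
  obtain ⟨w₁, hw₁, L, hL, hLq, hLS⟩ := hq.reverse.exists_first_mem hs
  have hLR : ∀ t ∈ L.support, t ∈ R.support := fun t ht => by
    simpa using hqR (by simpa using hLq ht)
  refine ⟨w₀, hw₀, w₁, hw₁, fun h => hw₀R (hLR _ (h ▸ L.end_mem_support)), Q, r, hrQ, L, hQ, hL,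
    hQS, hLS, fun t ht htQ => hqQ t (by simpa using hLq ht) htQ⟩

lemma isTypeXHalf (hG : TwoConnected G) {x y z : V} (hxy : x ≠ y) (hxz : x ≠ z) (hyz : y ≠ z) :
    IsTypeXHalf G Set.univ x y z := by
  classical
  obtain ⟨v, c, hc, hxc, hyc⟩ := hG.exists_isCycle_mem_mem hxy
  by_cases hzc : z ∈ c.support
  · exact ⟨v, z, c, nil, hc, hxc, hyc, hzc, hxz.symm, hyz.symm, .nil, by simp, by simp, by simp⟩
  obtain ⟨w₀, hw₀, w₁, hw₁, hw₀₁, Q, r, hrQ, L, hQ, hL, hQc, hLc, hLQ⟩ :=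
    hG.exists_isPath_branch (S := {t | t ∈ c.support}) hxc hyc hxy hzc
  by_cases h₀ : w₀ ≠ x ∧ w₀ ≠ y
  · exact ⟨v, w₀, c, Q, hc, hxc, hyc, hw₀, h₀.1, h₀.2, hQ, hQc, by simp, by simp⟩
  set Z := Q.takeUntil r hrQ
  have hZc : ∀ t ∈ Z.support, t ∉ c.support := fun t ht htc => by
    obtain rfl := hQc t (Q.support_takeUntil_subset_support hrQ ht) htc
    obtain rfl := hQ.eq_of_mem_support_takeUntil_of_mem_support_dropUntil hrQ ht
      (Q.dropUntil r hrQ).end_mem_support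
    exact hw₀₁ (hLc _ L.start_mem_support htc)
  have hZL : ∀ t ∈ Z.support, t ∈ L.support → t = r := fun t ht htL =>
    hLQ t htL (Q.support_takeUntil_subset_support hrQ ht)
  by_cases h₁ : w₁ ≠ x ∧ w₁ ≠ y
  · refine ⟨v, w₁, c, Z.append L, hc, hxc, hyc, hw₁, h₁.1, h₁.2, (hQ.takeUntil hrQ).append hL hZL,
      fun t ht htc => ?_, by simp, by simp⟩
    rw [mem_support_append_iff] at ht
    exact ht.elim (fun ht => absurd htc (hZc t ht)) (fun ht => hLc t ht htc)
  have hrc : r ∉ c.support := hZc r Z.end_mem_support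
  obtain ⟨c', hc', hw₁c', hrc', hZc'⟩ :=
    hc.exists_isCycle_of_branch hw₀ hw₁ hw₀₁ hQ hrQ hL hQc hLc hLQ hZc
  have hends : (x = w₀ ∨ x = w₁) ∧ (y = w₀ ∨ y = w₁) := by grind
  refine ⟨w₀, r, c', Z, hc', ?_, ?_, hrc', (ne_of_mem_of_not_mem hxc hrc).symm,
    (ne_of_mem_of_not_mem hyc hrc).symm, hQ.takeUntil hrQ, hZc', by simp, by simp⟩
  · rcases hends.1 with rfl | rfl <;> simp [hw₁c']
  · rcases hends.2 with rfl | rfl <;> simp [hw₁c']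

end TwoConnected

lemma IsTypeXHalf.map {V W : Type*} {H : SimpleGraph V} {G : SimpleGraph W} {f : H →g G}
    (hf : Function.Injective f) {S : Set V} {T : Set W} (hST : Set.MapsTo f S T) {x y z : V}
    (h : IsTypeXHalf H S x y z) : IsTypeXHalf G T (f x) (f y) (f z) := by
  obtain ⟨v, w, c, q, hc, hxc, hyc, hwc, hwx, hwy, hq, hqc, hcS, hqS⟩ := h
  refine ⟨f v, f w, c.map f, q.map f, hc.map hf, ?_, ?_, ?_, hf.ne hwx, hf.ne hwy, hq.map hf, ?_,
    ?_, ?_⟩ <;> simp only [Walk.support_map, List.mem_map, forall_exists_index, and_imp,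
      forall_apply_eq_imp_iff₂]
  · exact ⟨x, hxc, rfl⟩
  · exact ⟨y, hyc, rfl⟩
  · exact ⟨w, hwc, rfl⟩
  · exact fun s hs s' hs' hss' => congrArg f (hqc s hs (hf hss' ▸ hs'))
  · exact fun s hs => hST (hcS s hs)
  · exact fun s hs => hST (hqS s hs)

lemma TwoConnected.isTypeXHalf_of_induce {V : Type*} {H G : SimpleGraph V} (hHG : H ≤ G)
    {S : Set V} (hS : TwoConnected (H.induce S)) {x y z : V} (hx : x ∈ S) (hy : y ∈ S)
    (hz : z ∈ S) (hxy : x ≠ y) (hxz : x ≠ z) (hyz : y ≠ z) : IsTypeXHalf G S x y z :=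
  (hS.isTypeXHalf (x := ⟨x, hx⟩) (y := ⟨y, hy⟩) (z := ⟨z, hz⟩) (Subtype.coe_ne_coe.mp hxy)
    (Subtype.coe_ne_coe.mp hxz) (Subtype.coe_ne_coe.mp hyz)).map
    (f := (Hom.ofLE hHG).comp (Embedding.induce S).toHom) Subtype.val_injective
    fun s _ => s.2

namespace ThreeConnected

variable {V : Type*} {G : SimpleGraph V}

lemma exists_adj_mem_notMem (hG : ThreeConnected G) {S : Set V} {x y z v : V} (hz : z ∈ S)
    (hv : v ∉ S) (hzx : z ≠ x) (hzy : z ≠ y) (hvx : v ≠ x) (hvy : v ≠ y) :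
    ∃ a b, G.Adj a b ∧ a ∈ S ∧ b ∉ S ∧ a ≠ x ∧ a ≠ y := by
  obtain ⟨p⟩ := (hG.2 x y).preconnected ⟨z, by simp [hzx, hzy]⟩ ⟨v, by simp [hvx, hvy]⟩
  obtain ⟨d, -, hd, hd'⟩ := p.exists_boundary_dart (Subtype.val ⁻¹' S) hz hv
  have hdxy : d.fst.val ∉ ({x, y} : Set V) := d.fst.2
  exact ⟨d.fst, d.snd, d.adj, hd, hd', fun h => hdxy (.inl h), fun h => hdxy (.inr h)⟩

lemma exists_three_adj_mem_notMem (hG : ThreeConnected G) {S : Set V}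
    (hS : 3 ≤ Cardinal.mk S) {v : V} (hv : v ∉ S) :
    ∃ a₁ a₂ a₃ b₁ b₂ b₃, a₁ ∈ S ∧ a₂ ∈ S ∧ a₃ ∈ S ∧ a₁ ≠ a₂ ∧ a₁ ≠ a₃ ∧ a₂ ≠ a₃ ∧
      b₁ ∉ S ∧ b₂ ∉ S ∧ b₃ ∉ S ∧ G.Adj a₁ b₁ ∧ G.Adj a₂ b₂ ∧ G.Adj a₃ b₃ := by
  have step (x y : S) : ∃ a b, G.Adj a b ∧ a ∈ S ∧ b ∉ S ∧ a ≠ x ∧ a ≠ y := by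
    obtain ⟨z, hzx, hzy⟩ := Cardinal.exists_ne_ne_of_three_le hS x y
    exact hG.exists_adj_mem_notMem z.2 hv (Subtype.coe_ne_coe.mpr hzx)
      (Subtype.coe_ne_coe.mpr hzy) (ne_of_mem_of_not_mem x.2 hv).symm
      (ne_of_mem_of_not_mem y.2 hv).symm
  obtain ⟨s⟩ : Nonempty S := Cardinal.mk_ne_zero_iff.mp (by
    intro h
    rw [h] at hS
    norm_num at hS)
  obtain ⟨a₁, b₁, h₁, ha₁, hb₁, -⟩ := step s s
  obtain ⟨a₂, b₂, h₂, ha₂, hb₂, h₂₁, -⟩ := step ⟨a₁, ha₁⟩ ⟨a₁, ha₁⟩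
  obtain ⟨a₃, b₃, h₃, ha₃, hb₃, h₃₁, h₃₂⟩ := step ⟨a₁, ha₁⟩ ⟨a₂, ha₂⟩
  exact ⟨a₁, a₂, a₃, b₁, b₂, b₃, ha₁, ha₂, ha₃, h₂₁.symm, h₃₁.symm, h₃₂.symm, hb₁, hb₂, hb₃,
    h₁, h₂, h₃⟩

end ThreeConnected

lemma SimpleGraph.ConnectedComponent.mem_of_adj_of_mem_supp_of_notMem_supp {V : Type*}
    {G : SimpleGraph V} {A : Set (Sym2 V)} (c : (G.deleteEdges A).ConnectedComponent) {a b : V}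
    (hab : G.Adj a b) (ha : a ∈ c.supp) (hb : b ∉ c.supp) : s(a, b) ∈ A := by
  by_contra h
  exact hb ((c.mem_supp_congr_adj (deleteEdges_adj.mpr ⟨hab, h⟩)).mp ha)

lemma IndepEdges.ne_of_ne {V : Type*} {A : Set (Sym2 V)} (hA : IndepEdges A) {a₁ a₂ b₁ b₂ : V}
    (h₁ : s(a₁, b₁) ∈ A) (h₂ : s(a₂, b₂) ∈ A) (ha : a₁ ≠ a₂) : b₁ ≠ b₂ := by
  rintro rfl
  exact hA _ h₁ _ h₂ (fun h => ha (Sym2.congr_left.mp h)) b₁ (Sym2.mem_mk_right _ _)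
    (Sym2.mem_mk_right _ _)

lemma isTypeXWith_of_isTypeXHalf {V : Type*} {G : SimpleGraph V} {S T : Set V}
    (hST : Disjoint S T) {a₁ a₂ a₃ b₁ b₂ b₃ : V} (hA : IsTypeXHalf G S a₁ a₂ a₃)
    (hB : IsTypeXHalf G T b₁ b₂ b₃) (ha : a₁ ≠ a₂) (hb : b₁ ≠ b₂) (h₁ : G.Adj a₁ b₁)
    (h₂ : G.Adj a₂ b₂) (h₃ : G.Adj a₃ b₃) : IsTypeXWith G s(a₁, b₁) s(a₂, b₂) s(a₃, b₃) := by
  obtain ⟨v, w, c, q, hc, ha₁, ha₂, hw, hwa₁, hwa₂, hq, hqc, hcS, hqS⟩ := hA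
  obtain ⟨v', w', c', q', hc', hb₁, hb₂, hw', hwb₁, hwb₂, hq', hqc', hcT, hqT⟩ := hB
  have hST' {t : V} (hS : t ∈ S) (hT : t ∈ T) : False := Set.disjoint_left.mp hST hS hT
  have hP : (q.reverse.append (cons h₃ q')).IsPath := by
    refine hq.reverse.append (hq'.cons fun h => hST' (hqS _ q.start_mem_support) (hqT _ h)) ?_
    simp only [support_reverse, List.mem_reverse, support_cons, List.mem_cons]
    exact fun t ht ht' => ht'.resolve_right fun ht' => hST' (hqS t ht) (hqT t ht')
  refine ⟨a₁, a₂, w, b₁, b₂, w', _, _, q.reverse.append (cons h₃ q'), ⟨v, c, hc, rfl⟩,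
    ⟨v', c', hc', rfl⟩, ?_⟩
  rw [circVerts_setOf_mem_edges hc.not_nil, circVerts_setOf_mem_edges hc'.not_nil]
  refine ⟨Set.disjoint_left.mpr fun t h h' => hST' (hcS t h) (hcT t h'), ha₁, ha₂, hw, hb₁, hb₂,
    hw', ha, hwa₁.symm, hwa₂.symm, hb, hwb₁.symm, hwb₂.symm, h₁, h₂, rfl, rfl, hP,
    fun t ht htw htw' htc => ?_, by simp⟩
  have ht' : t ∈ q.support ∨ t ∈ q'.support := by
    simp only [mem_support_append_iff, support_reverse, List.mem_reverse, support_cons,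
      List.mem_cons] at ht
    rcases ht with ht | rfl | ht
    exacts [.inl ht, .inl q.start_mem_support, .inr ht]
  rcases ht' with ht' | ht' <;> rcases htc with htc | htc
  · exact htw (hqc t ht' htc)
  · exact hST' (hqS t ht') (hcT t htc)
  · exact hST' (hcS t htc) (hqT t ht')
  · exact htw' (hqc' t ht' htc)

theorem statement7_general {V : Type u} (G : SimpleGraph V) (h3 : ThreeConnected G)
    (A : Set (Sym2 V)) (hInd : IndepEdges A)
    (c₁ c₂ : (G.deleteEdges A).ConnectedComponent) (hne : c₁ ≠ c₂)
    (hall : ∀ c : (G.deleteEdges A).ConnectedComponent, c = c₁ ∨ c = c₂)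
    (h2c₁ : TwoConnected ((G.deleteEdges A).induce c₁.supp))
    (h2c₂ : TwoConnected ((G.deleteEdges A).induce c₂.supp)) :
    ∃ e₁ ∈ A, ∃ e₂ ∈ A, ∃ e₃ ∈ A, IsTypeXWith G e₁ e₂ e₃ := by
  have hdisj : Disjoint c₁.supp c₂.supp := pairwise_disjoint_supp_connectedComponent _ hne
  have hsupp₂ {b : V} (hb : b ∉ c₁.supp) : b ∈ c₂.supp := (hall _).resolve_left hb
  obtain ⟨v, hv⟩ := c₂.nonempty_supp
  obtain ⟨a₁, a₂, a₃, b₁, b₂, b₃, ha₁, ha₂, ha₃, ha₁₂, ha₁₃, ha₂₃, hb₁, hb₂, hb₃, h₁, h₂, h₃⟩ :=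
    h3.exists_three_adj_mem_notMem h2c₁.2.1 (Set.disjoint_right.mp hdisj hv)
  have he₁ := c₁.mem_of_adj_of_mem_supp_of_notMem_supp h₁ ha₁ hb₁
  have he₂ := c₁.mem_of_adj_of_mem_supp_of_notMem_supp h₂ ha₂ hb₂
  have he₃ := c₁.mem_of_adj_of_mem_supp_of_notMem_supp h₃ ha₃ hb₃
  have hb₁₂ := hInd.ne_of_ne he₁ he₂ ha₁₂
  have hX₁ := h2c₁.isTypeXHalf_of_induce (deleteEdges_le A) ha₁ ha₂ ha₃ ha₁₂ ha₁₃ ha₂₃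
  have hX₂ := h2c₂.isTypeXHalf_of_induce (deleteEdges_le A) (hsupp₂ hb₁) (hsupp₂ hb₂)
    (hsupp₂ hb₃) hb₁₂ (hInd.ne_of_ne he₁ he₃ ha₁₃) (hInd.ne_of_ne he₂ he₃ ha₂₃)
  exact ⟨_, he₁, _, he₂, _, he₃, isTypeXWith_of_isTypeXHalf hdisj hX₁ hX₂ ha₁₂ hb₁₂ h₁ h₂ h₃⟩

/-- If moreover both components of `G − A` are 2-connected, then
`G` contains a type-X subgraph with three connectors from `A`. -/
theorem statement7 {V : Type u} (G : SimpleGraph V) (h3 : ThreeConnected G)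
    (A : Set (Sym2 V)) (hA : A ⊆ G.edgeSet) (hInd : IndepEdges A)
    (c₁ c₂ : (G.deleteEdges A).ConnectedComponent) (hne : c₁ ≠ c₂)
    (hall : ∀ c : (G.deleteEdges A).ConnectedComponent, c = c₁ ∨ c = c₂)
    (hcross : ∀ x y : V, s(x, y) ∈ A →
      (G.deleteEdges A).connectedComponentMk x ≠ (G.deleteEdges A).connectedComponentMk y)
    (h2c₁ : TwoConnected ((G.deleteEdges A).induce c₁.supp))
    (h2c₂ : TwoConnected ((G.deleteEdges A).induce c₂.supp)) :
    ∃ e₁ ∈ A, ∃ e₂ ∈ A, ∃ e₃ ∈ A, IsTypeXWith G e₁ e₂ e₃ :=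
  statement7_general G h3 A hInd c₁ c₂ hne hall h2c₁ h2c₂
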